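/- The set of non-adjacent vertex pairs of G_Q that occur as a diagonal of some 4-belt of G_Q is exactly the eight pairs {a,g}, {c,f}, {a,j}, {d,f}, {c,j}, {d,h}, {f,h}, {g,j}. -/

import Mathlib

/-- Edge list of the facet-intersection graph `G_Q` of the polytope `𝒬`
(vertices: a=0, b=1, c=2, d=3, e=4, f=5, g=6, h=7, i=8, j=9, k=10). -/
def qEdgeList : List (Fin 11 × Fin 11) :=
  [(0,1),(0,2),(0,3),(0,4),(0,5),(1,2),(1,5),(1,6),(2,3),(2,6),(2,7),(2,8),
   (3,4),(3,8),(3,9),(4,5),(4,9),(5,6),(5,9),(5,10),(6,7),(6,10),(7,8),(7,9),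
   (7,10),(8,9),(9,10)]

/-- The facet-intersection graph `G_Q` of the polytope `𝒬`. -/
def G_Q : SimpleGraph (Fin 11) where
  Adj u v := (u, v) ∈ qEdgeList ∨ (v, u) ∈ qEdgeList
  symm := ⟨fun u v h => h.symm⟩
  loopless := ⟨by intro v; fin_cases v <;> decide⟩

instance : DecidableRel G_Q.Adj :=
  fun u v => inferInstanceAs (Decidable ((u, v) ∈ qEdgeList ∨ (v, u) ∈ qEdgeList))

/-- A 4-belt of a simple graph `G` is a 4-element vertex set that can be written as
`{w, x, y, z}` where `wx`, `xy`, `yz`, `zw` are edges of `G` while `wy`, `xz` are not. -/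
def IsFourBelt {V : Type*} (G : SimpleGraph V) (B : Set V) : Prop :=
  ∃ w x y z : V, B = {w, x, y, z} ∧ B.ncard = 4 ∧
    G.Adj w x ∧ G.Adj x y ∧ G.Adj y z ∧ G.Adj z w ∧ ¬ G.Adj w y ∧ ¬ G.Adj x z

/-- The pair `{u, v}` is a diagonal of the 4-belt `B` of `G`. -/
def IsDiagonalOfBelt {V : Type*} (G : SimpleGraph V) (u v : V) (B : Set V) : Prop :=
  ∃ w x y z : V, B = {w, x, y, z} ∧ B.ncard = 4 ∧
    G.Adj w x ∧ G.Adj x y ∧ G.Adj y z ∧ G.Adj z w ∧ ¬ G.Adj w y ∧ ¬ G.Adj x z ∧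
    (({u, v} : Set V) = {w, y} ∨ ({u, v} : Set V) = {x, z})

/-- The pair `{u, v}` is a diagonal of some 4-belt of `G`. -/
def IsBeltDiagonal {V : Type*} (G : SimpleGraph V) (u v : V) : Prop :=
  ∃ B : Set V, IsDiagonalOfBelt G u v B

/-! A pair `{u, v}` is a diagonal of a 4-belt exactly when `u` and `v` are distinct and
non-adjacent and have two distinct, non-adjacent common neighbours `x`, `z`: the belt is then
`{u, x, v, z}`. For `G_Q` this condition is decided by enumerating all quadruples of vertices. -/

theorem Set.ncard_eq_four_iff_pairwise_ne {V : Type*} (w x y z : V) :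
    ({w, x, y, z} : Set V).ncard = 4 ↔ w ≠ x ∧ w ≠ y ∧ w ≠ z ∧ x ≠ y ∧ x ≠ z ∧ y ≠ z := by
  classical
  have hset : ({w, x, y, z} : Set V) = ((w ::ₘ x ::ₘ y ::ₘ {z} : Multiset V).toFinset : Set V) := by
    ext; simp
  have hcard : (4 : ℕ) = Multiset.card (w ::ₘ x ::ₘ y ::ₘ {z} : Multiset V) := rfl
  rw [hset, Set.ncard_coe_finset, hcard, Multiset.toFinset_card_eq_card_iff_nodup]
  simp only [Multiset.nodup_cons, Multiset.mem_cons, Multiset.mem_singleton,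
    Multiset.nodup_singleton]
  tauto

section

variable {V : Type*} {G : SimpleGraph V} {u v : V}

theorem isBeltDiagonal_iff : IsBeltDiagonal G u v ↔ u ≠ v ∧ ¬ G.Adj u v ∧
    ∃ x z, x ≠ z ∧ ¬ G.Adj x z ∧ G.Adj u x ∧ G.Adj x v ∧ G.Adj v z ∧ G.Adj z u := by
  constructor
  · rintro ⟨B, w, x, y, z, rfl, hcard, hwx, hxy, hyz, hzw, hwy, hxz, hdiag⟩
    obtain ⟨-, hwy', -, -, hxz', -⟩ := (Set.ncard_eq_four_iff_pairwise_ne w x y z).1 hcard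
    rcases hdiag with hdiag | hdiag <;>
      rcases Set.pair_eq_pair_iff.1 hdiag with ⟨rfl, rfl⟩ | ⟨rfl, rfl⟩
    · exact ⟨hwy', hwy, x, z, hxz', hxz, hwx, hxy, hyz, hzw⟩
    · exact ⟨hwy'.symm, fun h => hwy h.symm, z, x, hxz'.symm, fun h => hxz h.symm,
        hyz, hzw, hwx, hxy⟩
    · exact ⟨hxz', hxz, y, w, hwy'.symm, fun h => hwy h.symm, hxy, hyz, hzw, hwx⟩
    · exact ⟨hxz'.symm, fun h => hxz h.symm, w, y, hwy', hwy, hzw, hwx, hxy, hyz⟩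
  · rintro ⟨huv, hnuv, x, z, hxz, hnxz, hux, hxv, hvz, hzu⟩
    refine ⟨{u, x, v, z}, u, x, v, z, rfl, ?_, hux, hxv, hvz, hzu, hnuv, hnxz, .inl rfl⟩
    exact (Set.ncard_eq_four_iff_pairwise_ne u x v z).2
      ⟨hux.ne, huv, hzu.ne', hxv.ne, hxz, hvz.ne⟩

end

def qBeltDiagonals : Finset (Sym2 (Fin 11)) :=
  {s(0, 6), s(2, 5), s(0, 9), s(3, 5), s(2, 9), s(3, 7), s(5, 7), s(6, 9)}

theorem isBeltDiagonal_G_Q_iff (u v : Fin 11) :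
    IsBeltDiagonal G_Q u v ↔ s(u, v) ∈ qBeltDiagonals := by
  rw [isBeltDiagonal_iff]
  revert u v
  decide

/-- The non-adjacent vertex pairs of `G_Q` occurring as a diagonal of some 4-belt of
`G_Q` are exactly the eight pairs {a,g}, {c,f}, {a,j}, {d,f}, {c,j}, {d,h}, {f,h}, {g,j}. -/
theorem stmt_7 :
    {p : Set (Fin 11) | ∃ u v : Fin 11, u ≠ v ∧ ¬ G_Q.Adj u v ∧
        IsBeltDiagonal G_Q u v ∧ p = {u, v}} =
      {({0, 6} : Set (Fin 11)), {2, 5}, {0, 9}, {3, 5}, {2, 9}, {3, 7}, {5, 7}, {6, 9}} := by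
  have hrhs : {({0, 6} : Set (Fin 11)), {2, 5}, {0, 9}, {3, 5}, {2, 9}, {3, 7}, {5, 7}, {6, 9}} =
      SetLike.coe '' (qBeltDiagonals : Set (Sym2 (Fin 11))) := by
    simp [qBeltDiagonals, Set.image_insert_eq]
  rw [hrhs]
  ext p
  simp only [Set.mem_ofPred_eq, Set.mem_image, Finset.mem_coe, Sym2.exists, Sym2.coe_mk]
  constructor
  · rintro ⟨u, v, -, -, hdiag, rfl⟩
    exact ⟨u, v, (isBeltDiagonal_G_Q_iff u v).1 hdiag, rfl⟩
  · rintro ⟨u, v, hmem, rfl⟩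
    have hdiag := (isBeltDiagonal_G_Q_iff u v).2 hmem
    obtain ⟨huv, hnuv, -⟩ := isBeltDiagonal_iff.1 hdiag
    exact ⟨u, v, huv, hnuv, hdiag, rfl⟩
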